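/- arXiv:1409.8597 — 3 statements merged into one kernel-verified Lean document; each statement's English description precedes it below -/
import Mathlib

section
/- Let Kt and Kc be nonempty finite sets indexing treated and control clusters, let A be a nonempty set of feasible cluster matchings a : Kt × Kc → Bool, and for each cluster pair p ∈ Kt × Kc let B_p be a nonempty finite set of feasible within-pair unit matchings with value function v_p : B_p → ℕ giving the number of matched pairs of units. For m_p defined as the maximum of v_p over B_p, the maximum over all feasible multilevel matchings — pairs (a, b) with a ∈ A and b assigning to each pair p with a(p) = true an element b(p) ∈ B_p — of the total number of matched unit pairs ∑_{p : a(p) = true} v_p(b(p)) equals the maximum over a ∈ A of ∑_{p : a(p) = true} m_p. -/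
open scoped Classical

/-- Value identity of Algorithm 1: the maximum total number of matched unit pairs
over all feasible multilevel matchings `(a, b)` equals the maximum over feasible
cluster matchings `a ∈ A` of the sum of the per-cluster-pair optima `m p`. -/
theorem multilevel_cardinality_matching_value
    {Kt Kc : Type*} [Fintype Kt] [Fintype Kc] [Nonempty Kt] [Nonempty Kc]
    {β : Kt × Kc → Type*}
    (A : Set ((Kt × Kc) → Bool)) (hA : A.Nonempty)
    (B : ∀ p : Kt × Kc, Finset (β p)) (hB : ∀ p, (B p).Nonempty)
    (v : ∀ p : Kt × Kc, β p → ℕ)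
    (m : Kt × Kc → ℕ) (hm : ∀ p, m p = (B p).sup' (hB p) (v p)) :
    sSup {n : ℕ | ∃ a ∈ A, ∃ b : ∀ p : Kt × Kc, β p,
        (∀ p, a p = true → b p ∈ B p) ∧
        n = ∑ p ∈ Finset.univ.filter (fun p => a p = true), v p (b p)} =
      sSup ((fun a : (Kt × Kc) → Bool =>
        ∑ p ∈ Finset.univ.filter (fun p => a p = true), m p) '' A) := by
  set S := {n : ℕ | ∃ a ∈ A, ∃ b : ∀ p : Kt × Kc, β p,
        (∀ p, a p = true → b p ∈ B p) ∧
        n = ∑ p ∈ Finset.univ.filter (fun p => a p = true), v p (b p)} with hS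
  set T := ((fun a : (Kt × Kc) → Bool =>
        ∑ p ∈ Finset.univ.filter (fun p => a p = true), m p) '' A) with hT
  -- optimal choice in each B p
  have hbm : ∀ p : Kt × Kc, ∃ x ∈ B p, (B p).sup' (hB p) (v p) = v p x := fun p =>
    Finset.exists_mem_eq_sup' (hB p) (v p)
  choose bm hbmB hbmv using hbm
  -- T ⊆ S
  have hTS : T ⊆ S := by
    rintro n ⟨a, haA, rfl⟩
    exact ⟨a, haA, bm, fun p _ => hbmB p,
      Finset.sum_congr rfl fun p _ => by rw [hm p, hbmv p]⟩
  -- common bound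
  have hbound : ∀ n ∈ S, n ≤ ∑ p : Kt × Kc, m p := by
    rintro n ⟨a, haA, b, hbB, rfl⟩
    calc ∑ p ∈ Finset.univ.filter (fun p => a p = true), v p (b p)
        ≤ ∑ p ∈ Finset.univ.filter (fun p => a p = true), m p := by
          refine Finset.sum_le_sum fun p hp => ?_
          rw [hm p]
          exact Finset.le_sup' (v p) (hbB p (Finset.mem_filter.mp hp).2)
      _ ≤ ∑ p : Kt × Kc, m p :=
          Finset.sum_le_sum_of_subset (Finset.filter_subset _ _)
  have hSbdd : BddAbove S := ⟨_, hbound⟩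
  have hTbdd : BddAbove T := hSbdd.mono hTS
  obtain ⟨a0, ha0⟩ := hA
  have hSne : S.Nonempty := ⟨_, hTS ⟨a0, ha0, rfl⟩⟩
  refine le_antisymm (csSup_le hSne ?_) (csSup_le_csSup hSbdd ⟨_, a0, ha0, rfl⟩ hTS)
  rintro n ⟨a, haA, b, hbB, rfl⟩
  refine le_trans ?_ (le_csSup hTbdd ⟨a, haA, rfl⟩)
  refine Finset.sum_le_sum fun p hp => ?_
  rw [hm p]
  exact Finset.le_sup' (v p) (hbB p (Finset.mem_filter.mp hp).2)
end

section
/- Let Kt and Kc be nonempty finite sets indexing treated and control clusters, let A be a nonempty finite set of feasible cluster matchings a : Kt × Kc → Bool, and for each cluster pair p ∈ Kt × Kc let B_p be a nonempty finite set of feasible within-pair unit matchings with value function v_p : B_p → ℕ, and set m_p = max over B_p of v_p. If for each pair p an element b*_p ∈ B_p attains m_p, and a* ∈ A maximizes a ↦ ∑_{p : a(p) = true} m_p over A, then the multilevel matching (a*, b*) (with b* restricted to the pairs p with a*(p) = true) attains the maximum of the total number of matched unit pairs ∑_{p : a(p) = true} v_p(b(p)) over all feasible multilevel matchings (a, b)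 with a ∈ A and b(p) ∈ B_p for each p with a(p) = true. -/
open scoped Classical

/-- Constructive content of the Proposition: the multilevel matching built backwards
by Algorithm 1 — with `bStar p` attaining the per-pair optimum `m p` for every
cluster pair `p`, and `aStar ∈ A` maximizing `a ↦ ∑_{p : a p} m p` — attains the
maximum total number of matched unit pairs over all feasible multilevel matchings. -/
theorem multilevel_cardinality_matching_optimizer
    {Kt Kc : Type*} [Fintype Kt] [Fintype Kc] [Nonempty Kt] [Nonempty Kc]
    {β : Kt × Kc → Type*}
    (A : Set ((Kt × Kc) → Bool)) (hA : A.Nonempty) (hAfin : A.Finite)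
    (B : ∀ p : Kt × Kc, Finset (β p)) (hB : ∀ p, (B p).Nonempty)
    (v : ∀ p : Kt × Kc, β p → ℕ)
    (m : Kt × Kc → ℕ) (hm : ∀ p, m p = (B p).sup' (hB p) (v p))
    (bStar : ∀ p : Kt × Kc, β p)
    (hbStar : ∀ p, bStar p ∈ B p ∧ v p (bStar p) = m p)
    (aStar : (Kt × Kc) → Bool) (haStar : aStar ∈ A)
    (haStarMax : ∀ a ∈ A,
      (∑ p ∈ Finset.univ.filter (fun p => a p = true), m p) ≤
        ∑ p ∈ Finset.univ.filter (fun p => aStar p = true), m p) :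
    IsGreatest {n : ℕ | ∃ a ∈ A, ∃ b : ∀ p : Kt × Kc, β p,
        (∀ p, a p = true → b p ∈ B p) ∧
        n = ∑ p ∈ Finset.univ.filter (fun p => a p = true), v p (b p)}
      (∑ p ∈ Finset.univ.filter (fun p => aStar p = true), v p (bStar p)) := by
  constructor
  · exact ⟨aStar, haStar, bStar, fun p _ => (hbStar p).1, rfl⟩
  · rintro n ⟨a, haA, b, hb, rfl⟩
    calc ∑ p ∈ Finset.univ.filter (fun p => a p = true), v p (b p)
        ≤ ∑ p ∈ Finset.univ.filter (fun p => a p = true), m p := by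
          refine Finset.sum_le_sum fun p hp => ?_
          rw [hm p]
          exact Finset.le_sup' (v p) (hb p (Finset.mem_filter.mp hp).2)
      _ ≤ ∑ p ∈ Finset.univ.filter (fun p => aStar p = true), m p := haStarMax a haA
      _ = ∑ p ∈ Finset.univ.filter (fun p => aStar p = true), v p (bStar p) := by
          exact Finset.sum_congr rfl fun p _ => ((hbStar p).2).symm
end

section
/- Let Kt and Kc be nonempty finite sets indexing treated and control clusters, let A be a nonempty set of feasible cluster matchings a : Kt × Kc → Bool, and for each cluster pair p ∈ Kt × Kc let B_p be a nonempty finite set of feasible within-pair unit matchings with a distance function δ_p : B_p → ℝ giving the total covariate distance between matched units in that pair. For d_p defined as the minimum of δ_p over B_p, the minimum over all feasible multilevel matchings (a, b) — with a ∈ A and b(p) ∈ B_p for each p with a(p) = true — of the total distance ∑_{p : a(p) = true} δ_p(b(p)) equals the minimum over a ∈ A of ∑_{p : a(p) = true} d_p. -/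
open scoped Classical

/-- Distance-minimization version: the minimum total covariate distance over all
feasible multilevel matchings `(a, b)` equals the minimum over feasible cluster
matchings `a ∈ A` of the sum of the per-cluster-pair minimum distances `d p`. -/
theorem multilevel_distance_matching_value
    {Kt Kc : Type*} [Fintype Kt] [Fintype Kc] [Nonempty Kt] [Nonempty Kc]
    {β : Kt × Kc → Type*}
    (A : Set ((Kt × Kc) → Bool)) (hA : A.Nonempty)
    (B : ∀ p : Kt × Kc, Finset (β p)) (hB : ∀ p, (B p).Nonempty)
    (δ : ∀ p : Kt × Kc, β p → ℝ)
    (d : Kt × Kc → ℝ) (hd : ∀ p, d p = (B p).inf' (hB p) (δ p)) :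
    sInf {r : ℝ | ∃ a ∈ A, ∃ b : ∀ p : Kt × Kc, β p,
        (∀ p, a p = true → b p ∈ B p) ∧
        r = ∑ p ∈ Finset.univ.filter (fun p => a p = true), δ p (b p)} =
      sInf ((fun a : (Kt × Kc) → Bool =>
        ∑ p ∈ Finset.univ.filter (fun p => a p = true), d p) '' A) := by
  classical
  set S := {r : ℝ | ∃ a ∈ A, ∃ b : ∀ p : Kt × Kc, β p,
        (∀ p, a p = true → b p ∈ B p) ∧
        r = ∑ p ∈ Finset.univ.filter (fun p => a p = true), δ p (b p)} with hSdef
  set T := ((fun a : (Kt × Kc) → Bool =>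
        ∑ p ∈ Finset.univ.filter (fun p => a p = true), d p) '' A) with hTdef
  set L : ℝ := ∑ p : Kt × Kc, min (d p) 0 with hLdef
  have hmin : ∀ p, ∀ x ∈ B p, d p ≤ δ p x := by
    intro p x hx; rw [hd p]; exact Finset.inf'_le _ hx
  -- choose minimizers
  choose bm hbm hval using fun p => (B p).exists_mem_eq_inf' (hB p) (δ p)
  have hdval : ∀ p, d p = δ p (bm p) := fun p => (hd p).trans (hval p)
  have hLd : ∀ (a : (Kt × Kc) → Bool),
      L ≤ ∑ p ∈ Finset.univ.filter (fun p => a p = true), d p := by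
    intro a
    calc L ≤ ∑ p ∈ Finset.univ.filter (fun p => a p = true), min (d p) 0 := by
            rw [hLdef, ← Finset.sum_filter_add_sum_filter_not Finset.univ
              (fun p => a p = true) (fun p => min (d p) 0)]
            have : ∑ p ∈ Finset.univ.filter (fun p => ¬ a p = true), min (d p) 0 ≤ 0 :=
              Finset.sum_nonpos (fun p _ => min_le_right _ _)
            linarith
      _ ≤ ∑ p ∈ Finset.univ.filter (fun p => a p = true), d p :=
            Finset.sum_le_sum (fun p _ => min_le_left _ _)
  have hTS : T ⊆ S := by
    rintro t ⟨a, ha, rfl⟩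
    refine ⟨a, ha, bm, fun p _ => hbm p, ?_⟩
    exact Finset.sum_congr rfl (fun p _ => hdval p)
  have hSne : S.Nonempty := ⟨_, hTS ⟨hA.choose, hA.choose_spec, rfl⟩⟩
  have hTne : T.Nonempty := ⟨_, hA.choose, hA.choose_spec, rfl⟩
  have hTbdd : BddBelow T := by
    refine ⟨L, ?_⟩; rintro t ⟨a, ha, rfl⟩; exact hLd a
  have hSbdd : BddBelow S := by
    refine ⟨L, ?_⟩
    rintro s ⟨a, ha, b, hb, rfl⟩
    refine (hLd a).trans (Finset.sum_le_sum fun p hp => ?_)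
    exact hmin p _ (hb p (Finset.mem_filter.mp hp).2)
  apply le_antisymm
  · exact csInf_le_csInf hSbdd hTne hTS
  · refine le_csInf hSne ?_
    rintro s ⟨a, ha, b, hb, rfl⟩
    refine le_trans (csInf_le hTbdd ⟨a, ha, rfl⟩) ?_
    exact Finset.sum_le_sum (fun p hp => hmin p _ (hb p (Finset.mem_filter.mp hp).2))
end
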